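/- arXiv:2508.15491 — 5 statements merged into one kernel-verified Lean document; each statement's English description precedes it below -/
import Mathlib

section
/- Let ρ : ℝ → ℝ be a positive smooth 2π-periodic function and Ξ_ρ(τ) = ρ(τ)(cos τ, sin τ). For (x,y)^⊤ := (y,−x), and for all τ ∈ ℝ, s ∈ (−π,π) with s ≠ 0, one has ∂_τ[ ((Ξ_ρ(τ) − Ξ_ρ(τ−s)) · Ξ_ρ'(τ−s)^⊤) / |Ξ_ρ(τ) − Ξ_ρ(τ−s)|² ] = ∂_s[ ((Ξ_ρ(τ) − Ξ_ρ(τ−s)) · (Ξ_ρ'(τ) − Ξ_ρ'(τ−s))^⊤) / |Ξ_ρ(τ) − Ξ_ρ(τ−s)|² ]. -/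
open Real

/-- The polar parametrization of the curve Γ_ρ. -/
noncomputable def Xi (ρ : ℝ → ℝ) (τ : ℝ) : ℝ × ℝ := (ρ τ * Real.cos τ, ρ τ * Real.sin τ)

/-- The operation z ↦ z^⊤, i.e. (x,y) ↦ (y,−x). -/
def perp (z : ℝ × ℝ) : ℝ × ℝ := (z.2, -z.1)

/-- The Euclidean inner product on ℝ². -/
def dot (a b : ℝ × ℝ) : ℝ := a.1 * b.1 + a.2 * b.2

/-- The squared Euclidean norm on ℝ². -/
def normSq2 (z : ℝ × ℝ) : ℝ := z.1 ^ 2 + z.2 ^ 2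

theorem kernel_derivative_exchange_perp (ρ : ℝ → ℝ) (hsm : ContDiff ℝ (⊤ : ℕ∞) ρ)
    (hper : Function.Periodic ρ (2 * π)) (hpos : ∀ τ, 0 < ρ τ)
    (τ s : ℝ) (hs : s ∈ Set.Ioo (-π) π) (hs0 : s ≠ 0) :
    deriv (fun τ' => dot (Xi ρ τ' - Xi ρ (τ' - s)) (perp (deriv (Xi ρ) (τ' - s))) /
        normSq2 (Xi ρ τ' - Xi ρ (τ' - s))) τ
      = deriv (fun s' => dot (Xi ρ τ - Xi ρ (τ - s'))
            (perp (deriv (Xi ρ) τ - deriv (Xi ρ) (τ - s'))) /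
          normSq2 (Xi ρ τ - Xi ρ (τ - s'))) s := by
  obtain ⟨hsl, hsr⟩ := hs
  set P : ℝ → ℝ := fun t => ρ t * Real.cos t with hPdef
  set Q : ℝ → ℝ := fun t => ρ t * Real.sin t with hQdef
  have hP : ContDiff ℝ (⊤ : ℕ∞) P := hsm.mul Real.contDiff_cos
  have hQ : ContDiff ℝ (⊤ : ℕ∞) Q := hsm.mul Real.contDiff_sin
  have one_le_top : (1 : WithTop ℕ∞) ≤ ⊤ := le_top
  have hPd : Differentiable ℝ P := hP.differentiable (by simp)
  have hQd : Differentiable ℝ Q := hQ.differentiable (by simp)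
  have hPd' : Differentiable ℝ (deriv P) :=
    ((contDiff_infty_iff_deriv.mp (hP.of_le (by simp))).2).differentiable (by simp)
  have hQd' : Differentiable ℝ (deriv Q) :=
    ((contDiff_infty_iff_deriv.mp (hQ.of_le (by simp))).2).differentiable (by simp)
  -- derivative of Xi
  have hXi' : ∀ t, HasDerivAt (Xi ρ) (deriv P t, deriv Q t) t := fun t =>
    ((hPd t).hasDerivAt).prodMk ((hQd t).hasDerivAt)
  have hXid : ∀ t, deriv (Xi ρ) t = (deriv P t, deriv Q t) := fun t => (hXi' t).deriv
  -- abbreviations for values at the point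
  set p := P τ; set q := Q τ; set p1 := P (τ - s); set q1 := Q (τ - s)
  set dp := deriv P τ; set dq := deriv Q τ
  set dp1 := deriv P (τ - s); set dq1 := deriv Q (τ - s)
  set d2p1 := deriv (deriv P) (τ - s); set d2q1 := deriv (deriv Q) (τ - s)
  -- the denominator is nonzero
  have hne : ¬(p - p1 = 0 ∧ q - q1 = 0) := by
    rintro ⟨h1, h2⟩
    have hp1 : ρ τ * Real.cos τ = ρ (τ - s) * Real.cos (τ - s) := by
      have := sub_eq_zero.mp h1; simpa [hPdef] using this
    have hq1 : ρ τ * Real.sin τ = ρ (τ - s) * Real.sin (τ - s) := by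
      have := sub_eq_zero.mp h2; simpa [hQdef] using this
    have hρ : ρ τ = ρ (τ - s) := by
      have hsq : (ρ τ) ^ 2 = (ρ (τ - s)) ^ 2 := by
        have : (ρ τ * Real.cos τ) ^ 2 + (ρ τ * Real.sin τ) ^ 2
            = (ρ (τ - s) * Real.cos (τ - s)) ^ 2 + (ρ (τ - s) * Real.sin (τ - s)) ^ 2 := by
          rw [hp1, hq1]
        have e1 : (ρ τ * Real.cos τ) ^ 2 + (ρ τ * Real.sin τ) ^ 2 = (ρ τ) ^ 2 := by
          have := Real.sin_sq_add_cos_sq τ; nlinarith [this]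
        have e2 : (ρ (τ - s) * Real.cos (τ - s)) ^ 2 + (ρ (τ - s) * Real.sin (τ - s)) ^ 2
            = (ρ (τ - s)) ^ 2 := by
          have := Real.sin_sq_add_cos_sq (τ - s); nlinarith [this]
        rw [e1, e2] at this; exact this
      have h0 : 0 < ρ τ := hpos τ
      have h0' : 0 < ρ (τ - s) := hpos (τ - s)
      nlinarith [hsq]
    have hcos : Real.cos τ = Real.cos (τ - s) := by
      have := hp1; rw [← hρ] at this
      exact mul_left_cancel₀ (ne_of_gt (hpos τ)) this
    have hsin : Real.sin τ = Real.sin (τ - s) := by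
      have := hq1; rw [← hρ] at this
      exact mul_left_cancel₀ (ne_of_gt (hpos τ)) this
    have hcs : Real.cos s = 1 := by
      have : Real.cos (τ - (τ - s)) = 1 := by
        rw [Real.cos_sub, hcos, hsin]
        rw [← Real.sin_sq_add_cos_sq (τ - s)]; ring
      simpa using this
    have hπ : 0 < π := Real.pi_pos
    have : s = 0 := by
      refine (Real.cos_eq_one_iff_of_lt_of_lt ?_ ?_).mp hcs
      · nlinarith
      · nlinarith
    exact hs0 this
  have hD : (p - p1) ^ 2 + (q - q1) ^ 2 ≠ 0 := by
    intro h
    apply hne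
    constructor <;> nlinarith [sq_nonneg (p - p1), sq_nonneg (q - q1)]
  -- rewrite the LHS function
  have hLfun : (fun τ' => dot (Xi ρ τ' - Xi ρ (τ' - s)) (perp (deriv (Xi ρ) (τ' - s))) /
        normSq2 (Xi ρ τ' - Xi ρ (τ' - s)))
      = fun τ' => ((P τ' - P (τ' - s)) * deriv Q (τ' - s) - (Q τ' - Q (τ' - s)) * deriv P (τ' - s)) /
          ((P τ' - P (τ' - s)) ^ 2 + (Q τ' - Q (τ' - s)) ^ 2) := by
    funext τ'
    rw [hXid]
    simp only [Xi, dot, perp, normSq2, Prod.fst_sub, Prod.snd_sub, hPdef, hQdef]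
    ring
  have hRfun : (fun s' => dot (Xi ρ τ - Xi ρ (τ - s'))
        (perp (deriv (Xi ρ) τ - deriv (Xi ρ) (τ - s'))) / normSq2 (Xi ρ τ - Xi ρ (τ - s')))
      = fun s' => ((P τ - P (τ - s')) * (deriv Q τ - deriv Q (τ - s'))
            - (Q τ - Q (τ - s')) * (deriv P τ - deriv P (τ - s'))) /
          ((P τ - P (τ - s')) ^ 2 + (Q τ - Q (τ - s')) ^ 2) := by
    funext s'
    rw [hXid, hXid]
    simp only [Xi, dot, perp, normSq2, Prod.fst_sub, Prod.snd_sub, hPdef, hQdef]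
    ring
  rw [hLfun, hRfun]
  -- HasDerivAt facts for shifted functions (LHS, variable τ')
  have hshift : ∀ (g : ℝ → ℝ), Differentiable ℝ g →
      HasDerivAt (fun t => g (t - s)) (deriv g (τ - s)) τ := by
    intro g hg
    have := ((hg (τ - s)).hasDerivAt).comp τ ((hasDerivAt_id τ).sub_const s)
    simpa [Function.comp_def] using this
  have hshift' : ∀ (g : ℝ → ℝ), Differentiable ℝ g →
      HasDerivAt (fun s' => g (τ - s')) (-(deriv g (τ - s))) s := by
    intro g hg
    have := ((hg (τ - s)).hasDerivAt).comp s ((hasDerivAt_id s).const_sub τ)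
    simpa [Function.comp_def] using this
  -- LHS derivative
  have hN1 : HasDerivAt
      (fun τ' => (P τ' - P (τ' - s)) * deriv Q (τ' - s) - (Q τ' - Q (τ' - s)) * deriv P (τ' - s))
      ((dp - dp1) * dq1 + (p - p1) * d2q1 - ((dq - dq1) * dp1 + (q - q1) * d2p1)) τ := by
    exact (((hPd τ).hasDerivAt.sub (hshift P hPd)).mul (hshift (deriv Q) hQd')).sub
      (((hQd τ).hasDerivAt.sub (hshift Q hQd)).mul (hshift (deriv P) hPd'))
  have hD1 : HasDerivAt
      (fun τ' => (P τ' - P (τ' - s)) ^ 2 + (Q τ' - Q (τ' - s)) ^ 2)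
      (2 * (p - p1) * (dp - dp1) + 2 * (q - q1) * (dq - dq1)) τ := by
    have h1 := ((hPd τ).hasDerivAt.sub (hshift P hPd)).pow 2
    have h2 := ((hQd τ).hasDerivAt.sub (hshift Q hQd)).pow 2
    have := h1.add h2
    refine this.congr_deriv ?_
    norm_num [Pi.sub_apply]
    ring
  have hLd : deriv (fun τ' => ((P τ' - P (τ' - s)) * deriv Q (τ' - s)
        - (Q τ' - Q (τ' - s)) * deriv P (τ' - s)) /
        ((P τ' - P (τ' - s)) ^ 2 + (Q τ' - Q (τ' - s)) ^ 2)) τ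
      = (((dp - dp1) * dq1 + (p - p1) * d2q1 - ((dq - dq1) * dp1 + (q - q1) * d2p1))
            * ((p - p1) ^ 2 + (q - q1) ^ 2)
          - ((p - p1) * dq1 - (q - q1) * dp1)
            * (2 * (p - p1) * (dp - dp1) + 2 * (q - q1) * (dq - dq1)))
        / (((p - p1) ^ 2 + (q - q1) ^ 2) ^ 2) := (hN1.div hD1 hD).deriv
  -- RHS derivative
  have hN2 : HasDerivAt
      (fun s' => (P τ - P (τ - s')) * (deriv Q τ - deriv Q (τ - s'))
        - (Q τ - Q (τ - s')) * (deriv P τ - deriv P (τ - s')))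
      (dp1 * (dq - dq1) + (p - p1) * d2q1 - (dq1 * (dp - dp1) + (q - q1) * d2p1)) s := by
    have h1 := ((hasDerivAt_const s (P τ)).sub (hshift' P hPd)).mul
      ((hasDerivAt_const s (deriv Q τ)).sub (hshift' (deriv Q) hQd'))
    have h2 := ((hasDerivAt_const s (Q τ)).sub (hshift' Q hQd)).mul
      ((hasDerivAt_const s (deriv P τ)).sub (hshift' (deriv P) hPd'))
    have := h1.sub h2
    refine this.congr_deriv ?_
    simp only [Pi.sub_apply]
    ring
  have hD2 : HasDerivAt
      (fun s' => (P τ - P (τ - s')) ^ 2 + (Q τ - Q (τ - s')) ^ 2)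
      (2 * (p - p1) * dp1 + 2 * (q - q1) * dq1) s := by
    have h1 := ((hasDerivAt_const s (P τ)).sub (hshift' P hPd)).pow 2
    have h2 := ((hasDerivAt_const s (Q τ)).sub (hshift' Q hQd)).pow 2
    have := h1.add h2
    refine this.congr_deriv ?_
    norm_num [Pi.sub_apply]
    ring
  have hRd : deriv (fun s' => ((P τ - P (τ - s')) * (deriv Q τ - deriv Q (τ - s'))
        - (Q τ - Q (τ - s')) * (deriv P τ - deriv P (τ - s'))) /
        ((P τ - P (τ - s')) ^ 2 + (Q τ - Q (τ - s')) ^ 2)) s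
      = ((dp1 * (dq - dq1) + (p - p1) * d2q1 - (dq1 * (dp - dp1) + (q - q1) * d2p1))
            * ((p - p1) ^ 2 + (q - q1) ^ 2)
          - ((p - p1) * (dq - dq1) - (q - q1) * (dp - dp1))
            * (2 * (p - p1) * dp1 + 2 * (q - q1) * dq1))
        / (((p - p1) ^ 2 + (q - q1) ^ 2) ^ 2) := (hN2.div hD2 hD).deriv
  rw [hLd, hRd, div_eq_div_iff (pow_ne_zero 2 hD) (pow_ne_zero 2 hD)]
  ring
end

section
/- Let ρ : ℝ → ℝ be a positive smooth 2π-periodic function and Ξ_ρ(τ) = ρ(τ)(cos τ, sin τ). For all τ ∈ ℝ, s ∈ (−π,π) with s ≠ 0, one has ∂_τ[ ((Ξ_ρ(τ) − Ξ_ρ(τ−s)) · Ξ_ρ'(τ−s)) / |Ξ_ρ(τ) − Ξ_ρ(τ−s)|² ] = ∂_s[ ((Ξ_ρ(τ) − Ξ_ρ(τ−s)) · (Ξ_ρ'(τ) − Ξ_ρ'(τ−s))) / |Ξ_ρ(τ) − Ξ_ρ(τ−s)|² ]. -/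
open Real

theorem kernel_derivative_exchange (ρ : ℝ → ℝ) (hsm : ContDiff ℝ (⊤ : ℕ∞) ρ)
    (hper : Function.Periodic ρ (2 * π)) (hpos : ∀ τ, 0 < ρ τ)
    (τ s : ℝ) (hs : s ∈ Set.Ioo (-π) π) (hs0 : s ≠ 0) :
    deriv (fun τ' => dot (Xi ρ τ' - Xi ρ (τ' - s)) (deriv (Xi ρ) (τ' - s)) /
        normSq2 (Xi ρ τ' - Xi ρ (τ' - s))) τ
      = deriv (fun s' => dot (Xi ρ τ - Xi ρ (τ - s'))
            (deriv (Xi ρ) τ - deriv (Xi ρ) (τ - s')) /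
          normSq2 (Xi ρ τ - Xi ρ (τ - s'))) s := by
  obtain ⟨hsl, hsr⟩ := hs
  -- basic differentiability
  have hρd : Differentiable ℝ ρ := hsm.differentiable (by simp)
  have hρ : ∀ t, HasDerivAt ρ (deriv ρ t) t := fun t => (hρd t).hasDerivAt
  have hsm0 : ContDiff ℝ (⊤ : ℕ∞) ρ := hsm.of_le (by simp)
  have hsm1 : ContDiff ℝ (⊤ : ℕ∞) (deriv ρ) := (contDiff_infty_iff_deriv.mp hsm0).2
  have hρ' : ∀ t, HasDerivAt (deriv ρ) (deriv (deriv ρ) t) t :=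
    fun t => (hsm1.differentiable (by simp) t).hasDerivAt
  -- component functions and their derivatives
  have hA : ∀ t, HasDerivAt (fun u => ρ u * Real.cos u)
      (deriv ρ t * Real.cos t - ρ t * Real.sin t) t := by
    intro t
    have := (hρ t).mul (Real.hasDerivAt_cos t)
    exact this.congr_deriv (by ring)
  have hB : ∀ t, HasDerivAt (fun u => ρ u * Real.sin u)
      (deriv ρ t * Real.sin t + ρ t * Real.cos t) t := by
    intro t
    exact (hρ t).mul (Real.hasDerivAt_sin t)
  have hP : ∀ t, HasDerivAt (fun u => deriv ρ u * Real.cos u - ρ u * Real.sin u)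
      (deriv (deriv ρ) t * Real.cos t - 2 * deriv ρ t * Real.sin t - ρ t * Real.cos t) t := by
    intro t
    have := ((hρ' t).mul (Real.hasDerivAt_cos t)).sub ((hρ t).mul (Real.hasDerivAt_sin t))
    exact this.congr_deriv (by ring)
  have hQ : ∀ t, HasDerivAt (fun u => deriv ρ u * Real.sin u + ρ u * Real.cos u)
      (deriv (deriv ρ) t * Real.sin t + 2 * deriv ρ t * Real.cos t - ρ t * Real.sin t) t := by
    intro t
    have := ((hρ' t).mul (Real.hasDerivAt_sin t)).add ((hρ t).mul (Real.hasDerivAt_cos t))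
    exact this.congr_deriv (by ring)
  -- derivative of Xi ρ
  have hXi : ∀ t, HasDerivAt (Xi ρ)
      (deriv ρ t * Real.cos t - ρ t * Real.sin t,
       deriv ρ t * Real.sin t + ρ t * Real.cos t) t := fun t => (hA t).prodMk (hB t)
  have hXid : ∀ t, deriv (Xi ρ) t =
      (deriv ρ t * Real.cos t - ρ t * Real.sin t,
       deriv ρ t * Real.sin t + ρ t * Real.cos t) := fun t => (hXi t).deriv
  -- the two points are distinct
  have hne : Xi ρ τ ≠ Xi ρ (τ - s) := by
    intro h
    have h1 : ρ τ * Real.cos τ = ρ (τ - s) * Real.cos (τ - s) := congrArg Prod.fst h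
    have h2 : ρ τ * Real.sin τ = ρ (τ - s) * Real.sin (τ - s) := congrArg Prod.snd h
    have hc1 : Real.sin τ ^ 2 + Real.cos τ ^ 2 = 1 := Real.sin_sq_add_cos_sq τ
    have hc2 : Real.sin (τ - s) ^ 2 + Real.cos (τ - s) ^ 2 = 1 := Real.sin_sq_add_cos_sq (τ - s)
    have e1 : (ρ τ * Real.cos τ) ^ 2 = (ρ (τ - s) * Real.cos (τ - s)) ^ 2 := by rw [h1]
    have e2 : (ρ τ * Real.sin τ) ^ 2 = (ρ (τ - s) * Real.sin (τ - s)) ^ 2 := by rw [h2]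
    have hsq : ρ τ ^ 2 = ρ (τ - s) ^ 2 := by
      have hx : ρ τ ^ 2 * (Real.sin τ ^ 2 + Real.cos τ ^ 2)
          = ρ (τ - s) ^ 2 * (Real.sin (τ - s) ^ 2 + Real.cos (τ - s) ^ 2) := by
        linear_combination e1 + e2
      rw [hc1, hc2] at hx
      simpa using hx
    have hle : ρ τ ≤ ρ (τ - s) := by nlinarith [hpos τ, hpos (τ - s)]
    have hge : ρ (τ - s) ≤ ρ τ := by nlinarith [hpos τ, hpos (τ - s)]
    have hr : ρ τ = ρ (τ - s) := le_antisymm hle hge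
    have hρ0 : ρ τ ≠ 0 := (hpos τ).ne'
    have hcc : Real.cos τ = Real.cos (τ - s) := by
      rw [hr] at h1
      exact mul_left_cancel₀ (hr ▸ hρ0) h1
    have hss : Real.sin τ = Real.sin (τ - s) := by
      rw [hr] at h2
      exact mul_left_cancel₀ (hr ▸ hρ0) h2
    have hcos1 : Real.cos s = 1 := by
      have : Real.cos (τ - (τ - s)) = Real.cos τ * Real.cos (τ - s) + Real.sin τ * Real.sin (τ - s) :=
        Real.cos_sub τ (τ - s)
      simp only [sub_sub_cancel] at this
      rw [this, hcc, hss]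
      nlinarith
    have hpi : (0 : ℝ) < π := Real.pi_pos
    have := (Real.cos_eq_one_iff_of_lt_of_lt (by linarith) (by linarith)).mp hcos1
    exact hs0 this
  -- nonvanishing denominator, scalar form
  have hD : ((ρ τ * Real.cos τ - ρ (τ - s) * Real.cos (τ - s)) ^ 2 +
      (ρ τ * Real.sin τ - ρ (τ - s) * Real.sin (τ - s)) ^ 2) ≠ 0 := by
    intro h
    apply hne
    have h1 : ρ τ * Real.cos τ - ρ (τ - s) * Real.cos (τ - s) = 0 := by
      nlinarith [sq_nonneg (ρ τ * Real.cos τ - ρ (τ - s) * Real.cos (τ - s)),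
        sq_nonneg (ρ τ * Real.sin τ - ρ (τ - s) * Real.sin (τ - s))]
    have h2 : ρ τ * Real.sin τ - ρ (τ - s) * Real.sin (τ - s) = 0 := by
      nlinarith [sq_nonneg (ρ τ * Real.cos τ - ρ (τ - s) * Real.cos (τ - s)),
        sq_nonneg (ρ τ * Real.sin τ - ρ (τ - s) * Real.sin (τ - s))]
    have := sub_eq_zero.mp h1
    have := sub_eq_zero.mp h2
    simp only [Xi, Prod.ext_iff]
    constructor <;> assumption
  -- rewrite both sides as scalar functions
  have hLfun : (fun τ' => dot (Xi ρ τ' - Xi ρ (τ' - s)) (deriv (Xi ρ) (τ' - s)) /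
        normSq2 (Xi ρ τ' - Xi ρ (τ' - s)))
      = fun τ' =>
        ((ρ τ' * Real.cos τ' - ρ (τ' - s) * Real.cos (τ' - s)) *
            (deriv ρ (τ' - s) * Real.cos (τ' - s) - ρ (τ' - s) * Real.sin (τ' - s)) +
         (ρ τ' * Real.sin τ' - ρ (τ' - s) * Real.sin (τ' - s)) *
            (deriv ρ (τ' - s) * Real.sin (τ' - s) + ρ (τ' - s) * Real.cos (τ' - s))) /
        ((ρ τ' * Real.cos τ' - ρ (τ' - s) * Real.cos (τ' - s)) ^ 2 +
         (ρ τ' * Real.sin τ' - ρ (τ' - s) * Real.sin (τ' - s)) ^ 2) := by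
    funext τ'
    rw [hXid (τ' - s)]
    simp [dot, normSq2, Xi, Prod.fst_sub, Prod.snd_sub]
  have hRfun : (fun s' => dot (Xi ρ τ - Xi ρ (τ - s'))
            (deriv (Xi ρ) τ - deriv (Xi ρ) (τ - s')) /
          normSq2 (Xi ρ τ - Xi ρ (τ - s')))
      = fun s' =>
        ((ρ τ * Real.cos τ - ρ (τ - s') * Real.cos (τ - s')) *
            ((deriv ρ τ * Real.cos τ - ρ τ * Real.sin τ) -
             (deriv ρ (τ - s') * Real.cos (τ - s') - ρ (τ - s') * Real.sin (τ - s'))) +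
         (ρ τ * Real.sin τ - ρ (τ - s') * Real.sin (τ - s')) *
            ((deriv ρ τ * Real.sin τ + ρ τ * Real.cos τ) -
             (deriv ρ (τ - s') * Real.sin (τ - s') + ρ (τ - s') * Real.cos (τ - s')))) /
        ((ρ τ * Real.cos τ - ρ (τ - s') * Real.cos (τ - s')) ^ 2 +
         (ρ τ * Real.sin τ - ρ (τ - s') * Real.sin (τ - s')) ^ 2) := by
    funext s'
    rw [hXid τ, hXid (τ - s')]
    simp [dot, normSq2, Xi, Prod.fst_sub, Prod.snd_sub]
  rw [hLfun, hRfun]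
  -- inner affine maps
  have hsub : HasDerivAt (fun τ' : ℝ => τ' - s) 1 τ := (hasDerivAt_id τ).sub_const s
  have hneg : HasDerivAt (fun s' : ℝ => τ - s') (-1) s := (hasDerivAt_id s).const_sub τ
  -- composed pieces for LHS
  have cA : HasDerivAt (fun τ' => ρ (τ' - s) * Real.cos (τ' - s))
      (deriv ρ (τ - s) * Real.cos (τ - s) - ρ (τ - s) * Real.sin (τ - s)) τ := by
    simpa [Function.comp_def] using (hA (τ - s)).comp τ hsub
  have cB : HasDerivAt (fun τ' => ρ (τ' - s) * Real.sin (τ' - s))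
      (deriv ρ (τ - s) * Real.sin (τ - s) + ρ (τ - s) * Real.cos (τ - s)) τ := by
    simpa [Function.comp_def] using (hB (τ - s)).comp τ hsub
  have cP : HasDerivAt (fun τ' => deriv ρ (τ' - s) * Real.cos (τ' - s) - ρ (τ' - s) * Real.sin (τ' - s))
      (deriv (deriv ρ) (τ - s) * Real.cos (τ - s) - 2 * deriv ρ (τ - s) * Real.sin (τ - s) -
        ρ (τ - s) * Real.cos (τ - s)) τ := by
    simpa [Function.comp_def] using (hP (τ - s)).comp τ hsub
  have cQ : HasDerivAt (fun τ' => deriv ρ (τ' - s) * Real.sin (τ' - s) + ρ (τ' - s) * Real.cos (τ' - s))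
      (deriv (deriv ρ) (τ - s) * Real.sin (τ - s) + 2 * deriv ρ (τ - s) * Real.cos (τ - s) -
        ρ (τ - s) * Real.sin (τ - s)) τ := by
    simpa [Function.comp_def] using (hQ (τ - s)).comp τ hsub
  -- composed pieces for RHS
  have dA : HasDerivAt (fun s' => ρ (τ - s') * Real.cos (τ - s'))
      (-(deriv ρ (τ - s) * Real.cos (τ - s) - ρ (τ - s) * Real.sin (τ - s))) s := by
    simpa [Function.comp_def] using (hA (τ - s)).comp s hneg
  have dB : HasDerivAt (fun s' => ρ (τ - s') * Real.sin (τ - s'))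
      (-(deriv ρ (τ - s) * Real.sin (τ - s) + ρ (τ - s) * Real.cos (τ - s))) s := by
    simpa [Function.comp_def] using (hB (τ - s)).comp s hneg
  have dP : HasDerivAt (fun s' => deriv ρ (τ - s') * Real.cos (τ - s') - ρ (τ - s') * Real.sin (τ - s'))
      (-(deriv (deriv ρ) (τ - s) * Real.cos (τ - s) - 2 * deriv ρ (τ - s) * Real.sin (τ - s) -
        ρ (τ - s) * Real.cos (τ - s))) s := by
    simpa [Function.comp_def] using (hP (τ - s)).comp s hneg
  have dQ : HasDerivAt (fun s' => deriv ρ (τ - s') * Real.sin (τ - s') + ρ (τ - s') * Real.cos (τ - s'))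
      (-(deriv (deriv ρ) (τ - s) * Real.sin (τ - s) + 2 * deriv ρ (τ - s) * Real.cos (τ - s) -
        ρ (τ - s) * Real.sin (τ - s))) s := by
    simpa [Function.comp_def] using (hQ (τ - s)).comp s hneg
  -- LHS numerator / denominator
  have hnumL := (((hA τ).sub cA).mul cP).add ((((hB τ).sub cB)).mul cQ)
  have hdenL := (((hA τ).sub cA).pow 2).add (((hB τ).sub cB).pow 2)
  have hL := (hnumL.div hdenL hD).deriv
  -- RHS numerator / denominator
  have hnumR := (((hasDerivAt_const s (ρ τ * Real.cos τ)).sub dA).mul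
      ((hasDerivAt_const s (deriv ρ τ * Real.cos τ - ρ τ * Real.sin τ)).sub dP)).add
    (((hasDerivAt_const s (ρ τ * Real.sin τ)).sub dB).mul
      ((hasDerivAt_const s (deriv ρ τ * Real.sin τ + ρ τ * Real.cos τ)).sub dQ))
  have hdenR := (((hasDerivAt_const s (ρ τ * Real.cos τ)).sub dA).pow 2).add
    (((hasDerivAt_const s (ρ τ * Real.sin τ)).sub dB).pow 2)
  have hR := (hnumR.div hdenR hD).deriv
  refine Eq.trans hL (Eq.trans ?_ hR.symm)
  simp only [Pi.add_apply, Pi.sub_apply, Pi.mul_apply, Pi.pow_apply]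
  congr 1
  ring
end

section
/- Let v : Ω → ℝ² be a C¹ vector field on an open set Ω ⊆ ℝ² with div v = 0 and rot v = 0 (i.e., ∂₁v₂ − ∂₂v₁ = 0) on Ω. Define W : Ω → ℝ² by W(z) := z·|v(z)|² − 2 v(z) (z · v(z)). Then div W = 0 on Ω. -/
/-- If v is a C¹ divergence-free and curl-free vector field on an open set Ω ⊆ ℝ²,
then W(z) = |v(z)|² z − 2 (z·v(z)) v(z) is divergence free on Ω. -/
theorem div_Rellich_field_eq_zero (Ω : Set (ℝ × ℝ)) (hΩ : IsOpen Ω)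
    (v : ℝ × ℝ → ℝ × ℝ) (Dv : ℝ × ℝ → (ℝ × ℝ) →L[ℝ] (ℝ × ℝ))
    (hv : ∀ z ∈ Ω, HasFDerivAt v (Dv z) z)
    (hvC1 : ContinuousOn Dv Ω)
    (hdiv : ∀ z ∈ Ω, (Dv z (1, 0)).1 + (Dv z (0, 1)).2 = 0)
    (hrot : ∀ z ∈ Ω, (Dv z (1, 0)).2 - (Dv z (0, 1)).1 = 0) :
    ∀ z ∈ Ω, ∃ B : (ℝ × ℝ) →L[ℝ] (ℝ × ℝ),
      HasFDerivAt (fun w : ℝ × ℝ =>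
          (((v w).1 ^ 2 + (v w).2 ^ 2) • w - (2 * (w.1 * (v w).1 + w.2 * (v w).2)) • v w)) B z
      ∧ (B (1, 0)).1 + (B (0, 1)).2 = 0 := by
  intro z hz
  have hv' := hv z hz
  have h1 : HasFDerivAt (fun w => (v w).1) ((ContinuousLinearMap.fst ℝ ℝ ℝ).comp (Dv z)) z :=
    (ContinuousLinearMap.fst ℝ ℝ ℝ).hasFDerivAt.comp z hv'
  have h2 : HasFDerivAt (fun w => (v w).2) ((ContinuousLinearMap.snd ℝ ℝ ℝ).comp (Dv z)) z :=
    (ContinuousLinearMap.snd ℝ ℝ ℝ).hasFDerivAt.comp z hv'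
  have hp1 : HasFDerivAt (fun w : ℝ × ℝ => w.1) (ContinuousLinearMap.fst ℝ ℝ ℝ) z :=
    (ContinuousLinearMap.fst ℝ ℝ ℝ).hasFDerivAt
  have hp2 : HasFDerivAt (fun w : ℝ × ℝ => w.2) (ContinuousLinearMap.snd ℝ ℝ ℝ) z :=
    (ContinuousLinearMap.snd ℝ ℝ ℝ).hasFDerivAt
  have hf : HasFDerivAt (fun w => (v w).1 ^ 2 + (v w).2 ^ 2)
      (((v z).1 • ((ContinuousLinearMap.fst ℝ ℝ ℝ).comp (Dv z)) +
        (v z).1 • ((ContinuousLinearMap.fst ℝ ℝ ℝ).comp (Dv z))) +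
       ((v z).2 • ((ContinuousLinearMap.snd ℝ ℝ ℝ).comp (Dv z)) +
        (v z).2 • ((ContinuousLinearMap.snd ℝ ℝ ℝ).comp (Dv z)))) z := by
    simpa only [pow_two, smul_eq_mul, Pi.mul_def, Pi.add_def] using (h1.mul h1).add (h2.mul h2)
  have hh : HasFDerivAt (fun w : ℝ × ℝ => 2 * (w.1 * (v w).1 + w.2 * (v w).2)) _ z :=
    ((hp1.mul h1).add (hp2.mul h2)).const_mul 2
  refine ⟨_, (hf.smul (hasFDerivAt_id z)).sub (hh.smul hv'), ?_⟩
  have hd := hdiv z hz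
  have hr := hrot z hz
  simp only [ContinuousLinearMap.sub_apply, ContinuousLinearMap.add_apply,
    ContinuousLinearMap.smul_apply, ContinuousLinearMap.smulRight_apply,
    ContinuousLinearMap.comp_apply, ContinuousLinearMap.coe_fst', ContinuousLinearMap.coe_snd',
    ContinuousLinearMap.coe_id', id_eq, Prod.fst_sub, Prod.snd_sub, Prod.fst_add, Prod.snd_add, Prod.smul_fst, Prod.smul_snd,
    smul_eq_mul]
  linear_combination (-2*(z.1*(v z).1 + z.2*(v z).2)) * hd + (2*((v z).2*z.1 - z.2*(v z).1)) * hr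
end

section
/- Let A : E₁ → E₀ be a bounded operator between Banach spaces with dense embedding E₁ ↪ E₀, and suppose there are ω > 0 and κ ≥ 1 such that ω − A : E₁ → E₀ is bijective and κ‖(λ − A)x‖_{E₀} ≥ |λ|‖x‖_{E₀} + ‖x‖_{E₁} for all complex λ with Re λ ≥ ω and all x ∈ E₁. Then every λ with Re λ ≥ ω belongs to the resolvent set of A (as an unbounded operator in E₀ with domain E₁), and ‖(λ − A)⁻¹‖_{L(E₀)} ≤ κ/|λ| for Re λ ≥ ω. -/
/-- Continuation step: if `μ•J - A` is bijective and `lam` is close to `μ`,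
then `lam•J - A` is bijective. -/
lemma resolvent_step {E₀ E₁ : Type*}
    [NormedAddCommGroup E₀] [NormedSpace ℂ E₀] [CompleteSpace E₀]
    [NormedAddCommGroup E₁] [NormedSpace ℂ E₁] [CompleteSpace E₁]
    (J A : E₁ →L[ℂ] E₀) (ω κ : ℝ) (hκ : 1 ≤ κ)
    (hest : ∀ lam : ℂ, ω ≤ lam.re → ∀ x : E₁,
      ‖lam‖ * ‖J x‖ + ‖x‖ ≤ κ * ‖lam • J x - A x‖)
    (μ lam : ℂ) (hμ : ω ≤ μ.re) (hlam : ω ≤ lam.re)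
    (hd : ‖lam - μ‖ * (κ * (‖J‖ + 1)) < 1)
    (hbijμ : Function.Bijective (fun x : E₁ => μ • J x - A x)) :
    Function.Bijective (fun x : E₁ => lam • J x - A x) := by
  have hκ0 : (0:ℝ) ≤ κ := le_trans zero_le_one hκ
  set Tμ : E₁ →L[ℂ] E₀ := μ • J - A with hTμ
  have hTμapp : ∀ x, Tμ x = μ • J x - A x := fun x => rfl
  have hbijT : Function.Bijective Tμ := by
    convert hbijμ using 1
    exact funext hTμapp
  -- continuous linear equivalence
  let e : E₁ ≃L[ℂ] E₀ := ContinuousLinearEquiv.ofBijective Tμ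
    (LinearMap.ker_eq_bot.2 hbijT.1) (LinearMap.range_eq_top.2 hbijT.2)
  have he : ∀ x, e x = Tμ x := fun x => rfl
  have heS : ∀ y, Tμ (e.symm y) = y := fun y => by
    rw [← he]; exact e.apply_symm_apply y
  let S : E₀ →L[ℂ] E₁ := (e.symm : E₀ →L[ℂ] E₁)
  have hSnorm : ∀ y : E₀, ‖S y‖ ≤ κ * ‖y‖ := by
    intro y
    have h := hest μ hμ (e.symm y)
    have h2 : (μ • J (e.symm y) - A (e.symm y)) = y := heS y
    rw [h2] at h
    have hgoal : ‖(e.symm y : E₁)‖ ≤ κ * ‖y‖ := by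
      nlinarith [mul_nonneg (norm_nonneg μ) (norm_nonneg (J (e.symm y)))]
    exact hgoal
  set B : E₀ →L[ℂ] E₀ := (lam - μ) • (J ∘L S) with hB
  have hBnorm : ‖B‖ < 1 := by
    have h1 : ‖B‖ ≤ ‖lam - μ‖ * (‖J‖ * κ) := by
      refine ContinuousLinearMap.opNorm_le_bound _ ?_ fun y => ?_
      · exact mul_nonneg (norm_nonneg _) (mul_nonneg (norm_nonneg J) hκ0)
      · have hBy : B y = (lam - μ) • (J (S y)) := rfl
        rw [hBy, norm_smul]
        have hh1 : ‖J (S y)‖ ≤ ‖J‖ * ‖S y‖ := J.le_opNorm _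
        have hh2 : ‖S y‖ ≤ κ * ‖y‖ := hSnorm y
        have habs := norm_nonneg (lam - μ)
        have h3 : ‖J (S y)‖ ≤ ‖J‖ * (κ * ‖y‖) :=
          hh1.trans (mul_le_mul_of_nonneg_left hh2 (norm_nonneg J))
        calc ‖lam - μ‖ * ‖J (S y)‖
            ≤ ‖lam - μ‖ * (‖J‖ * (κ * ‖y‖)) :=
              mul_le_mul_of_nonneg_left h3 habs
          _ = ‖lam - μ‖ * (‖J‖ * κ) * ‖y‖ := by ring
    refine lt_of_le_of_lt (le_trans h1 ?_) hd
    have := norm_nonneg (lam - μ)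
    nlinarith [norm_nonneg J, hκ0]
  -- G = 1 + B is a unit
  have hnegB : ‖-B‖ < 1 := by rwa [norm_neg]
  let u : (E₀ →L[ℂ] E₀)ˣ := Units.oneSub (-B) hnegB
  have hu : (u : E₀ →L[ℂ] E₀) = 1 + B := by
    show 1 - (-B) = 1 + B
    rw [sub_neg_eq_add]
  have hubij : Function.Bijective (⇑(u : E₀ →L[ℂ] E₀)) := by
    refine Function.bijective_iff_has_inverse.2 ⟨⇑(↑u⁻¹ : E₀ →L[ℂ] E₀), ?_, ?_⟩
    · intro x
      have : (↑u⁻¹ * ↑u : E₀ →L[ℂ] E₀) x = x := by rw [u.inv_mul]; rfl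
      exact this
    · intro x
      have : (↑u * ↑u⁻¹ : E₀ →L[ℂ] E₀) x = x := by rw [u.mul_inv]; rfl
      exact this
  have key : (fun x : E₁ => lam • J x - A x) = ⇑(u : E₀ →L[ℂ] E₀) ∘ ⇑Tμ := by
    funext x
    have hS1 : S (Tμ x) = x := by
      show e.symm (Tμ x) = x
      rw [← he]; exact e.symm_apply_apply x
    have hBT : B (Tμ x) = (lam - μ) • J x := by
      have h0 : B (Tμ x) = (lam - μ) • J (S (Tμ x)) := rfl
      rw [h0, hS1]
    have hGT : (↑u : E₀ →L[ℂ] E₀) (Tμ x) = Tμ x + B (Tμ x) := by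
      rw [hu]; simp
    have hc : (⇑(↑u : E₀ →L[ℂ] E₀) ∘ ⇑Tμ) x = (↑u : E₀ →L[ℂ] E₀) (Tμ x) := rfl
    rw [hc, hGT, hBT, hTμapp, sub_smul]
    abel
  rw [key]
  exact hubij.comp hbijT

/-- Generation-type resolvent statement: if ω − A is bijective and the a priori
estimate κ‖(λ−A)x‖ ≥ |λ|‖x‖_{E₀} + ‖x‖_{E₁} holds for all Re λ ≥ ω, then every λ with
Re λ ≥ ω belongs to the resolvent set of A and ‖(λ−A)⁻¹‖ ≤ κ/|λ|. -/
theorem resolvent_set_from_estimate {E₀ E₁ : Type*}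
    [NormedAddCommGroup E₀] [NormedSpace ℂ E₀] [CompleteSpace E₀]
    [NormedAddCommGroup E₁] [NormedSpace ℂ E₁] [CompleteSpace E₁]
    (J : E₁ →L[ℂ] E₀) (hJinj : Function.Injective J) (hJdense : DenseRange J)
    (A : E₁ →L[ℂ] E₀) (ω κ : ℝ) (hω : 0 < ω) (hκ : 1 ≤ κ)
    (hbij : Function.Bijective (fun x : E₁ => (ω : ℂ) • J x - A x))
    (hest : ∀ lam : ℂ, ω ≤ lam.re → ∀ x : E₁,
      ‖lam‖ * ‖J x‖ + ‖x‖ ≤ κ * ‖lam • J x - A x‖) :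
    ∀ lam : ℂ, ω ≤ lam.re →
      Function.Bijective (fun x : E₁ => lam • J x - A x) ∧
      ∀ x : E₁, ‖lam‖ * ‖J x‖ ≤ κ * ‖lam • J x - A x‖ := by
  intro lam hlam
  have hκ0 : (0:ℝ) < κ := lt_of_lt_of_le zero_lt_one hκ
  constructor
  · -- continuation from ω to lam
    set δ : ℝ := 1 / (2 * (κ * (‖J‖ + 1))) with hδ
    have hden : 0 < κ * (‖J‖ + 1) := by positivity
    have hδpos : 0 < δ := by positivity
    set n : ℕ := ⌈‖lam - ω‖ / δ⌉₊ + 1 with hn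
    have hnpos : (0:ℝ) < n := by positivity
    have hstep : ‖lam - ω‖ / n ≤ δ := by
      rw [div_le_iff₀ hnpos]
      have h1 : ‖lam - ω‖ / δ ≤ n := by
        refine le_trans (Nat.le_ceil _) ?_
        push_cast [hn]; linarith [Nat.le_ceil (‖lam - ω‖ / δ)]
      calc ‖lam - ω‖ = (‖lam - ω‖ / δ) * δ := by
            field_simp
        _ ≤ n * δ := by gcongr
        _ = δ * n := mul_comm _ _
    -- μ k := ω + (k/n) (lam - ω)
    have main : ∀ k : ℕ, k ≤ n →
        Function.Bijective (fun x : E₁ =>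
          ((ω : ℂ) + ((k : ℝ)/(n : ℝ) : ℝ) • (lam - ω)) • J x - A x) := by
      intro k
      induction k with
      | zero =>
        intro _
        simpa using hbij
      | succ k ih =>
        intro hk
        have hk' : k ≤ n := Nat.le_of_succ_le hk
        have hre : ∀ m : ℕ, ω ≤ ((ω : ℂ) + ((m : ℝ)/(n : ℝ) : ℝ) • (lam - ω)).re := by
          intro m
          have h0 : (0:ℝ) ≤ (m:ℝ)/(n:ℝ) := by positivity
          have : ((ω : ℂ) + ((m : ℝ)/(n : ℝ) : ℝ) • (lam - ω)).re
              = ω + ((m:ℝ)/(n:ℝ)) * (lam.re - ω) := by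
            simp [Complex.add_re, Complex.smul_re, Complex.sub_re, Complex.ofReal_re]
          rw [this]
          nlinarith [sub_nonneg.2 hlam]
        have hdist : ‖((ω : ℂ) + (((k+1 : ℕ) : ℝ)/(n : ℝ) : ℝ) • (lam - ω))
              - ((ω : ℂ) + ((k : ℝ)/(n : ℝ) : ℝ) • (lam - ω))‖
            * (κ * (‖J‖ + 1)) < 1 := by
          have heq : ((ω : ℂ) + (((k+1 : ℕ) : ℝ)/(n : ℝ) : ℝ) • (lam - ω))
              - ((ω : ℂ) + ((k : ℝ)/(n : ℝ) : ℝ) • (lam - ω))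
              = ((1/(n:ℝ) : ℝ) : ℂ) * (lam - ω) := by
            push_cast
            rw [Complex.real_smul, Complex.real_smul]
            push_cast
            field_simp
            ring
          rw [heq]
          rw [norm_mul]
          have : ‖((1/(n:ℝ) : ℝ) : ℂ)‖ = 1/(n:ℝ) := by
            rw [Complex.norm_real, Real.norm_eq_abs, abs_of_pos]; positivity
          rw [this]
          have h2 : 1/(n:ℝ) * ‖lam - ω‖ ≤ δ := by
            rw [one_div, inv_mul_eq_div]
            exact hstep
          calc 1/(n:ℝ) * ‖lam - ↑ω‖ * (κ * (‖J‖ + 1))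
              ≤ δ * (κ * (‖J‖ + 1)) := by gcongr
            _ = 1/2 := by rw [hδ]; field_simp
            _ < 1 := by norm_num
        exact resolvent_step J A ω κ hκ hest _ _ (hre k) (hre (k+1)) hdist (ih hk')
    have := main n le_rfl
    have hfinal : (ω : ℂ) + (((n : ℝ)/(n : ℝ) : ℝ)) • (lam - ω) = lam := by
      rw [div_self (ne_of_gt hnpos)]
      simp
    rw [hfinal] at this
    exact this
  · intro x
    have := hest lam hlam x
    linarith [norm_nonneg x]
end

section
/- Let n, m, p ∈ ℕ with 1 ≤ p ≤ n + 1, let h₁, …, hₙ : ℝ → ℝ be 2π-periodic Lipschitz functions, and let ϱ₁, …, ϱ_m be 2π-periodic continuous functions with ϱᵢ ≥ M⁻¹ > 0. Define for β ∈ L¹(𝕋) and τ ∈ ℝ: B(β)(τ) := (1/π) ∫_{−π}^{π} [ t_{[s]}^p · Π_{i=1}^n ((hᵢ(τ)−hᵢ(τ−s))/t_{[s]}) ] / [ Π_{i=1}^m ( (ϱᵢ(τ)+ϱᵢ(τ−s))² + ((ϱᵢ(τ)−ϱᵢ(τ−s))/t_{[s]})² ) ] · (β(τ−s)/t_{[s]})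 ds, where t_{[s]} = tan(s/2). Then the integral converges absolutely and there is a constant C = C(M, n, m) such that ‖B(β)‖_∞ ≤ C ‖β‖_{L¹} Π_{i=1}^n Lip(hᵢ) for all β ∈ L¹(𝕋). -/
open Real MeasureTheory

lemma measurable_tan' : Measurable Real.tan := by
  have : Real.tan = fun x => Real.sin x / Real.cos x := funext Real.tan_eq_sin_div_cos
  rw [this]
  exact Real.continuous_sin.measurable.div Real.continuous_cos.measurable

lemma periodic_intervalIntegrable' {f : ℝ → ℝ} {T c : ℝ} (hT : 0 < T)
    (hf : Function.Periodic f T) (h : IntervalIntegrable f volume c (c + T)) (a b : ℝ) :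
    IntervalIntegrable f volume a b := by
  have hk : ∀ k : ℤ, IntervalIntegrable f volume (c + k * T) (c + k * T + T) := by
    intro k
    have h2 := h.comp_sub_right (k * T)
    have heq : (fun x => f (x - k * T)) = f := funext fun x => (hf.int_mul k).sub_eq x
    rw [heq] at h2
    have e : c + T + ↑k * T = c + ↑k * T + T := by ring
    rw [e] at h2
    exact h2
  have hn : ∀ (k : ℤ) (j : ℕ), IntervalIntegrable f volume (c + k * T) (c + k * T + j * T) := by
    intro k j
    induction j with
    | zero => simp
    | succ j ih =>
      have h2 := hk (k + j)
      have e1 : c + (↑(k + (j:ℤ))) * T = c + ↑k * T + (j:ℝ) * T := by push_cast; ring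
      have e2 : c + (↑(k + (j:ℤ))) * T + T = c + ↑k * T + ((j:ℕ)+1 : ℝ) * T := by push_cast; ring
      rw [e2, e1] at h2
      have h3 := ih.trans h2
      have e4 : c + ↑k * T + ((j:ℕ)+1 : ℝ) * T = c + ↑k * T + ((j+1 : ℕ) : ℝ) * T := by
        push_cast; ring
      rw [e4] at h3
      exact h3
  obtain ⟨k, hk'⟩ := exists_int_lt ((min a b - c) / T)
  obtain ⟨l, hl'⟩ := exists_int_gt ((max a b - c) / T)
  have hkT : c + k * T ≤ min a b := by
    have := (lt_div_iff₀ hT).mp hk'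
    linarith
  have hlT : max a b ≤ c + l * T := by
    have := (div_lt_iff₀ hT).mp hl'
    linarith
  have hkl : k ≤ l := by
    have hmm : (k : ℝ) * T ≤ (l : ℝ) * T := by
      have := min_le_max (a := a) (b := b); linarith
    exact_mod_cast le_of_mul_le_mul_right hmm hT
  have h4 := hn k (l - k).toNat
  have e3 : c + ↑k * T + ((l - k).toNat : ℝ) * T = c + ↑l * T := by
    have : ((l - k).toNat : ℝ) = (l : ℝ) - (k : ℝ) := by
      have := Int.toNat_of_nonneg (sub_nonneg.mpr hkl)
      exact_mod_cast congrArg (Int.cast : ℤ → ℝ) this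
    rw [this]; ring
  rw [e3] at h4
  apply h4.mono_set
  apply Set.uIcc_subset_uIcc
  · exact Set.mem_uIcc.mpr (Or.inl ⟨le_trans hkT (min_le_left a b), le_trans (le_max_left a b) hlT⟩)
  · exact Set.mem_uIcc.mpr (Or.inl ⟨le_trans hkT (min_le_right a b), le_trans (le_max_right a b) hlT⟩)

lemma abs_le_two_mul_abs_tan_half {s : ℝ} (h1 : -π < s) (h2 : s < π) :
    |s| ≤ 2 * |Real.tan (s / 2)| := by
  rcases le_or_gt 0 s with hs | hs
  · have h := Real.le_tan (by linarith : (0:ℝ) ≤ s / 2) (by linarith : s / 2 < π / 2)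
    have ht : 0 ≤ Real.tan (s / 2) := le_trans (by linarith) h
    rw [abs_of_nonneg hs, abs_of_nonneg ht]; linarith
  · have h := Real.le_tan (x := -(s / 2)) (by linarith) (by linarith)
    rw [Real.tan_neg] at h
    have ht : Real.tan (s / 2) ≤ 0 := by linarith
    rw [abs_of_neg hs, abs_of_nonpos ht]; linarith

lemma kernel_pointwise_bound (n m p : ℕ) (hp1 : 1 ≤ p) (hp2 : p ≤ n + 1)
    (M : ℝ) (hM : 0 < M) (h : Fin n → ℝ → ℝ) (K : Fin n → NNReal) (ϱ : Fin m → ℝ → ℝ)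
    (β : ℝ → ℝ) (hK : ∀ i, LipschitzWith (K i) (h i)) (hϱM : ∀ i τ, M⁻¹ ≤ ϱ i τ)
    (τ s : ℝ) (hs1 : -π < s) (hs2 : s < π) :
    |(1 / π) * ((Real.tan (s / 2) ^ p * ∏ i, ((h i τ - h i (τ - s)) / Real.tan (s / 2)))
        / (∏ i, ((ϱ i τ + ϱ i (τ - s)) ^ 2 + ((ϱ i τ - ϱ i (τ - s)) / Real.tan (s / 2)) ^ 2)))
      * (β (τ - s) / Real.tan (s / 2))|
      ≤ ((2:ℝ) ^ (n+1) * π ^ n / (π * (4 * (M⁻¹)^2) ^ m)) * (∏ i, (K i : ℝ)) * |β (τ - s)| := by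
  have hπ : (0:ℝ) < π := Real.pi_pos
  set t := Real.tan (s / 2) with ht_def
  rcases eq_or_ne t 0 with ht | ht
  · rw [ht]
    simp only [div_zero, mul_zero, abs_zero]
    positivity
  have htabs : 0 < |t| := abs_pos.mpr ht
  have hd : (0:ℝ) < 4 * (M⁻¹)^2 := by positivity
  have hDi : ∀ i : Fin m, 4 * (M⁻¹)^2 ≤ (ϱ i τ + ϱ i (τ - s)) ^ 2 + ((ϱ i τ - ϱ i (τ - s)) / t) ^ 2 := by
    intro i
    have h1 : 2 * M⁻¹ ≤ ϱ i τ + ϱ i (τ - s) := by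
      have := hϱM i τ; have := hϱM i (τ - s); linarith
    have hMi : (0:ℝ) < M⁻¹ := inv_pos.mpr hM
    nlinarith [sq_nonneg ((ϱ i τ - ϱ i (τ - s)) / t)]
  have hB : (4 * (M⁻¹)^2) ^ m ≤ ∏ i, ((ϱ i τ + ϱ i (τ - s)) ^ 2 + ((ϱ i τ - ϱ i (τ - s)) / t) ^ 2) := by
    calc (4 * (M⁻¹)^2) ^ m = ∏ _i : Fin m, (4 * (M⁻¹)^2) := by simp
    _ ≤ _ := Finset.prod_le_prod (fun i _ => le_of_lt hd) (fun i _ => hDi i)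
  have hBpos : (0:ℝ) < ∏ i, ((ϱ i τ + ϱ i (τ - s)) ^ 2 + ((ϱ i τ - ϱ i (τ - s)) / t) ^ 2) :=
    lt_of_lt_of_le (pow_pos hd m) hB
  set q : ℝ := min 2 (π / |t|) with hq_def
  have hq0 : 0 ≤ q := le_min (by norm_num) (by positivity)
  have hq2 : q ≤ 2 := min_le_left _ _
  have hqt : |t| * q ≤ π := by
    have h1 : q ≤ π / |t| := min_le_right _ _
    calc |t| * q ≤ |t| * (π / |t|) := mul_le_mul_of_nonneg_left h1 (abs_nonneg t)
    _ = π := by field_simp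
  have hfac : ∀ i : Fin n, |(h i τ - h i (τ - s)) / t| ≤ (K i : ℝ) * q := by
    intro i
    have hlip : |h i τ - h i (τ - s)| ≤ (K i : ℝ) * |s| := by
      have hd2 := (hK i).dist_le_mul τ (τ - s)
      rw [Real.dist_eq, Real.dist_eq] at hd2
      have e : τ - (τ - s) = s := by ring
      rw [e] at hd2; exact hd2
    have hs_t : |s| ≤ 2 * |t| := abs_le_two_mul_abs_tan_half hs1 hs2
    have hs_pi : |s| ≤ π := by rw [abs_le]; constructor <;> linarith
    have hK0 : (0:ℝ) ≤ K i := (K i).coe_nonneg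
    have hsq : |s| ≤ q * |t| := by
      have e1 : q * |t| = min (2 * |t|) ((π / |t|) * |t|) := min_mul_of_nonneg _ _ (abs_nonneg t)
      have e2 : (π / |t|) * |t| = π := by field_simp
      rw [e1, e2]
      exact le_min hs_t hs_pi
    rw [abs_div, div_le_iff₀ htabs]
    calc |h i τ - h i (τ - s)| ≤ (K i : ℝ) * |s| := hlip
    _ ≤ (K i : ℝ) * (q * |t|) := mul_le_mul_of_nonneg_left hsq hK0
    _ = (K i : ℝ) * q * |t| := by ring
  have hprodK : |∏ i, ((h i τ - h i (τ - s)) / t)| ≤ (∏ i, (K i : ℝ)) * q ^ n := by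
    rw [Finset.abs_prod]
    calc ∏ i, |(h i τ - h i (τ - s)) / t|
        ≤ ∏ i, ((K i : ℝ) * q) :=
          Finset.prod_le_prod (fun i _ => abs_nonneg _) (fun i _ => hfac i)
    _ = (∏ i, (K i : ℝ)) * q ^ n := by
        rw [Finset.prod_mul_distrib]; simp
  obtain ⟨p', rfl⟩ : ∃ p', p = p' + 1 := ⟨p - 1, (Nat.succ_pred_eq_of_pos hp1).symm⟩
  have hp'n : p' ≤ n := by omega
  have hK0' : 0 ≤ ∏ i, (K i : ℝ) := Finset.prod_nonneg fun i _ => (K i).coe_nonneg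
  have hone_pi : (1:ℝ) ≤ π := by nlinarith [Real.pi_gt_three]
  have hNt : |t ^ (p' + 1) * ∏ i, ((h i τ - h i (τ - s)) / t)| / |t|
      ≤ (∏ i, (K i : ℝ)) * (π ^ n * 2 ^ (n + 1)) := by
    rw [abs_mul, abs_pow, pow_succ]
    have e : |t| ^ p' * |t| * |∏ i, ((h i τ - h i (τ - s)) / t)| / |t|
        = |t| ^ p' * |∏ i, ((h i τ - h i (τ - s)) / t)| := by
      field_simp
    rw [e]
    calc |t| ^ p' * |∏ i, ((h i τ - h i (τ - s)) / t)|
        ≤ |t| ^ p' * ((∏ i, (K i : ℝ)) * q ^ n) :=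
          mul_le_mul_of_nonneg_left hprodK (by positivity)
    _ = (∏ i, (K i : ℝ)) * ((|t| * q) ^ p' * q ^ (n - p')) := by
        have eq : q ^ n = q ^ p' * q ^ (n - p') := by
          rw [← pow_add, Nat.add_sub_cancel' hp'n]
        rw [eq, mul_pow]; ring
    _ ≤ (∏ i, (K i : ℝ)) * (π ^ n * 2 ^ (n + 1)) := by
        apply mul_le_mul_of_nonneg_left _ hK0'
        have a1 : (|t| * q) ^ p' ≤ π ^ n :=
          le_trans (pow_le_pow_left₀ (by positivity) hqt p') (pow_le_pow_right₀ hone_pi hp'n)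
        have a2 : q ^ (n - p') ≤ 2 ^ (n + 1) :=
          le_trans (pow_le_pow_left₀ hq0 hq2 _) (pow_le_pow_right₀ one_le_two (by omega))
        exact mul_le_mul a1 a2 (by positivity) (by positivity)
  set B := ∏ i, ((ϱ i τ + ϱ i (τ - s)) ^ 2 + ((ϱ i τ - ϱ i (τ - s)) / t) ^ 2) with hBdef
  set A := |t ^ (p' + 1) * ∏ i, ((h i τ - h i (τ - s)) / t)| with hAdef
  set b := |β (τ - s)| with hbdef
  set Kp := ∏ i, ((K i : ℝ)) with hKpdef
  have hA0 : 0 ≤ A := abs_nonneg _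
  have hb0 : 0 ≤ b := abs_nonneg _
  have habs : |(1 / π) * ((t ^ (p' + 1) * ∏ i, ((h i τ - h i (τ - s)) / t)) / B)
      * (β (τ - s) / t)| = (1 / π) * (A / B) * (b / |t|) := by
    rw [hAdef, hbdef]
    rw [abs_mul, abs_mul, abs_div, abs_div, abs_div, abs_one, abs_of_pos hπ,
      abs_of_pos hBpos]
  rw [habs]
  have hB' : B ≠ 0 := ne_of_gt hBpos
  have ht'' : |t| ≠ 0 := ne_of_gt htabs
  have hπ' : π ≠ 0 := ne_of_gt hπ
  calc 1 / π * (A / B) * (b / |t|)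
      = 1 / π * ((A / |t|) * b / B) := by
        field_simp
  _ ≤ 1 / π * ((Kp * (π ^ n * 2 ^ (n + 1))) * b / (4 * (M⁻¹)^2) ^ m) := by
        apply mul_le_mul_of_nonneg_left _ (by positivity)
        apply div_le_div₀ (by positivity)
          (mul_le_mul_of_nonneg_right hNt hb0) (pow_pos hd m) hB
  _ = ((2:ℝ) ^ (n+1) * π ^ n / (π * (4 * (M⁻¹)^2) ^ m)) * Kp * b := by
      have hdm : ((4 * (M⁻¹)^2) ^ m : ℝ) ≠ 0 := ne_of_gt (pow_pos hd m)
      field_simp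

set_option maxHeartbeats 1600000 in
/-- Boundedness of the non-singular integral operators B^p_{n,m} with 1 ≤ p ≤ n+1:
the kernel is bounded, the integral converges absolutely, and
‖B(β)‖_∞ ≤ C(M,n,m) ‖β‖_{L¹} ∏ Lip(hᵢ). -/
theorem Bnmp_bounded_L1_to_C (n m p : ℕ) (hp1 : 1 ≤ p) (hp2 : p ≤ n + 1)
    (M : ℝ) (hM : 0 < M) :
    ∃ C : ℝ, 0 < C ∧
      ∀ (h : Fin n → ℝ → ℝ) (K : Fin n → NNReal) (ϱ : Fin m → ℝ → ℝ) (β : ℝ → ℝ),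
        (∀ i, Function.Periodic (h i) (2 * π)) →
        (∀ i, LipschitzWith (K i) (h i)) →
        (∀ i, Continuous (ϱ i)) →
        (∀ i, Function.Periodic (ϱ i) (2 * π)) →
        (∀ i τ, M⁻¹ ≤ ϱ i τ) →
        Function.Periodic β (2 * π) →
        IntegrableOn β (Set.Ioo (-π) π) →
        ∀ τ : ℝ,
          IntegrableOn (fun s =>
            (1 / π) * ((Real.tan (s / 2) ^ p
                * ∏ i, ((h i τ - h i (τ - s)) / Real.tan (s / 2)))
              / (∏ i, ((ϱ i τ + ϱ i (τ - s)) ^ 2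
                + ((ϱ i τ - ϱ i (τ - s)) / Real.tan (s / 2)) ^ 2)))
              * (β (τ - s) / Real.tan (s / 2))) (Set.Ioo (-π) π) ∧
          |∫ s in Set.Ioo (-π) π,
            (1 / π) * ((Real.tan (s / 2) ^ p
                * ∏ i, ((h i τ - h i (τ - s)) / Real.tan (s / 2)))
              / (∏ i, ((ϱ i τ + ϱ i (τ - s)) ^ 2
                + ((ϱ i τ - ϱ i (τ - s)) / Real.tan (s / 2)) ^ 2)))
              * (β (τ - s) / Real.tan (s / 2))|
            ≤ C * (∫ s in Set.Ioo (-π) π, |β s|) * ∏ i, (K i : ℝ) := by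
  have hπ : (0:ℝ) < π := Real.pi_pos
  refine ⟨(2:ℝ) ^ (n+1) * π ^ n / (π * (4 * (M⁻¹)^2) ^ m), by positivity, ?_⟩
  intro h K ϱ β hhper hK hϱc hϱper hϱM hβper hβint τ
  set C : ℝ := (2:ℝ) ^ (n+1) * π ^ n / (π * (4 * (M⁻¹)^2) ^ m) with hC
  set F : ℝ → ℝ := fun s =>
    (1 / π) * ((Real.tan (s / 2) ^ p
        * ∏ i, ((h i τ - h i (τ - s)) / Real.tan (s / 2)))
      / (∏ i, ((ϱ i τ + ϱ i (τ - s)) ^ 2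
        + ((ϱ i τ - ϱ i (τ - s)) / Real.tan (s / 2)) ^ 2)))
      * (β (τ - s) / Real.tan (s / 2)) with hF
  have hle : (-π : ℝ) ≤ π := by linarith
  have h2π : (0:ℝ) < 2 * π := by linarith
  -- integrability of the translated density
  have hββ : IntervalIntegrable β volume (-π) (-π + 2 * π) := by
    have e : -π + 2 * π = π := by ring
    rw [e]
    exact (intervalIntegrable_iff_integrableOn_Ioo_of_le hle).mpr hβint
  have hall := periodic_intervalIntegrable' h2π hβper hββ
  have hgInt : IntegrableOn (fun s => β (τ - s)) (Set.Ioo (-π) π) := by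
    have h1 := (hall (τ + π) (τ - π)).comp_sub_left τ
    rw [show τ - (τ + π) = -π by ring, show τ - (τ - π) = π by ring] at h1
    exact (intervalIntegrable_iff_integrableOn_Ioo_of_le hle).mp h1
  -- pointwise bound
  have hpt : ∀ s ∈ Set.Ioo (-π) π, |F s| ≤ C * (∏ i, (K i : ℝ)) * |β (τ - s)| := by
    intro s hs
    rw [hC, hF]
    exact kernel_pointwise_bound n m p hp1 hp2 M hM h K ϱ β hK hϱM τ s hs.1 hs.2
  -- majorant
  have hmajInt : Integrable (fun s => C * (∏ i, (K i : ℝ)) * |β (τ - s)|)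
      (volume.restrict (Set.Ioo (-π) π)) := hgInt.abs.const_mul _
  -- measurability
  have hmeas_tan : Measurable fun s : ℝ => Real.tan (s / 2) :=
    measurable_tan'.comp (measurable_id.div_const 2)
  have hmeasF : Measurable fun s : ℝ => (1 / π) * ((Real.tan (s / 2) ^ p
      * ∏ i, ((h i τ - h i (τ - s)) / Real.tan (s / 2)))
    / (∏ i, ((ϱ i τ + ϱ i (τ - s)) ^ 2
      + ((ϱ i τ - ϱ i (τ - s)) / Real.tan (s / 2)) ^ 2))) := by
    apply Measurable.const_mul
    apply Measurable.div
    · apply (hmeas_tan.pow_const p).mul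
      apply Finset.measurable_prod
      intro i _
      exact (measurable_const.sub ((hK i).continuous.measurable.comp
        (measurable_const.sub measurable_id))).div hmeas_tan
    · apply Finset.measurable_prod
      intro i _
      have hc : Measurable fun s : ℝ => ϱ i (τ - s) :=
        (hϱc i).measurable.comp (measurable_const.sub measurable_id)
      exact ((measurable_const.add hc).pow_const 2).add
        (((measurable_const.sub hc).div hmeas_tan).pow_const 2)
  have hg' : AEMeasurable (fun s => β (τ - s)) (volume.restrict (Set.Ioo (-π) π)) :=
    hgInt.aemeasurable
  have hq : AEMeasurable (fun s => β (τ - s) / Real.tan (s / 2))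
      (volume.restrict (Set.Ioo (-π) π)) :=
    hg'.div (hmeas_tan.aemeasurable.restrict)
  have hAESM : AEStronglyMeasurable F (volume.restrict (Set.Ioo (-π) π)) := by
    rw [hF]
    exact ((hmeasF.aemeasurable.restrict).mul hq).aestronglyMeasurable
  have hbound_ae : ∀ᵐ s ∂(volume.restrict (Set.Ioo (-π) π)),
      ‖F s‖ ≤ C * (∏ i, (K i : ℝ)) * |β (τ - s)| := by
    apply Filter.eventually_of_mem (self_mem_ae_restrict measurableSet_Ioo)
    intro s hs
    rw [Real.norm_eq_abs]
    exact hpt s hs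
  have hint : IntegrableOn F (Set.Ioo (-π) π) := hmajInt.mono' hAESM hbound_ae
  refine ⟨hint, ?_⟩
  have habs_int : |∫ s in Set.Ioo (-π) π, F s| ≤ ∫ s in Set.Ioo (-π) π, |F s| := by
    simpa [Real.norm_eq_abs] using
      norm_integral_le_integral_norm (μ := volume.restrict (Set.Ioo (-π) π)) F
  have hmono : ∫ s in Set.Ioo (-π) π, |F s|
      ≤ ∫ s in Set.Ioo (-π) π, C * (∏ i, (K i : ℝ)) * |β (τ - s)| := by
    apply integral_mono_ae hint.abs hmajInt
    apply Filter.eventually_of_mem (self_mem_ae_restrict measurableSet_Ioo)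
    intro s hs
    exact hpt s hs
  have hconst : ∫ s in Set.Ioo (-π) π, C * (∏ i, (K i : ℝ)) * |β (τ - s)|
      = C * (∏ i, (K i : ℝ)) * ∫ s in Set.Ioo (-π) π, |β (τ - s)| :=
    integral_const_mul _ _
  have hperabs : Function.Periodic (fun u => |β u|) (2 * π) := fun u => by
    simp [hβper u]
  have htrans : ∫ s in Set.Ioo (-π) π, |β (τ - s)| = ∫ s in Set.Ioo (-π) π, |β s| := by
    calc ∫ s in Set.Ioo (-π) π, |β (τ - s)|
        = ∫ s in Set.Ioc (-π) π, |β (τ - s)| := (integral_Ioc_eq_integral_Ioo).symm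
      _ = ∫ s in (-π)..π, |β (τ - s)| := (intervalIntegral.integral_of_le hle).symm
      _ = ∫ u in (τ - π)..(τ + π), |β u| := by
          have h1 := intervalIntegral.integral_comp_sub_left (a := -π) (b := π)
            (fun u => |β u|) τ
          rw [show τ - -π = τ + π by ring] at h1
          exact h1
      _ = ∫ u in (-π)..π, |β u| := by
          have h2 := hperabs.intervalIntegral_add_eq (τ - π) (-π)
          rw [show τ - π + 2 * π = τ + π by ring, show -π + 2 * π = π by ring] at h2
          exact h2
      _ = ∫ s in Set.Ioc (-π) π, |β s| := intervalIntegral.integral_of_le hle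
      _ = ∫ s in Set.Ioo (-π) π, |β s| := integral_Ioc_eq_integral_Ioo
  calc |∫ s in Set.Ioo (-π) π, F s|
      ≤ ∫ s in Set.Ioo (-π) π, |F s| := habs_int
    _ ≤ ∫ s in Set.Ioo (-π) π, C * (∏ i, (K i : ℝ)) * |β (τ - s)| := hmono
    _ = C * (∏ i, (K i : ℝ)) * ∫ s in Set.Ioo (-π) π, |β (τ - s)| := hconst
    _ = C * (∏ i, (K i : ℝ)) * ∫ s in Set.Ioo (-π) π, |β s| := by rw [htrans]
    _ = C * (∫ s in Set.Ioo (-π) π, |β s|) * ∏ i, (K i : ℝ) := by ring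
end
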